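/- Let (S; ·, \, /) be an algebra satisfying system (A), and define x ⋆ y := (x·y)/y. Then for all x, y, z in S: x ⋆ (y·z) = x ⋆ z, x ⋆ (y \ z) = x ⋆ z, and x ⋆ (y/z) = x ⋆ z. (Equivalently, the map sending x to the right ⋆-translation by x is a homomorphism onto a right zero semigroup.) -/

import Mathlib

/-!
Two identities drive everything: `(a·b) ⋆ c = a·(b ⋆ c)` (from (A5)) and `(a ⋆ b) ⋆ c = a ⋆ c`
(from (A4)). Together they give `x ⋆ u = (x ⋆ u) ⋆ c = x ⋆ c` whenever `u ⋆ c = u`, so it suffices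
to exhibit `z ⋆ (y·z) = z` and `(y/z) ⋆ z = y/z`. The second is (A4); the first follows from
idempotency `a ⋆ a = a` applied to `y·z` and left cancellation. The case `y \ z` reduces to the
product case since `y·(y \ z) = z`.
-/

/-- The star operation `x ⋆ y := (x·y)/y`. -/
def star {S : Type*} (mul rd : S → S → S) (x y : S) : S := rd (mul x y) y

section SystemA

variable {S : Type*} {mul ld rd : S → S → S}

theorem star_eq_mul_rd (A3 : ∀ x y : S, mul (rd x y) y = rd (mul x y) y) (a b : S) :
    star mul rd a b = mul (rd a b) b :=
  (A3 a b).symm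

theorem star_mul_left (A3 : ∀ x y : S, mul (rd x y) y = rd (mul x y) y)
    (A5 : ∀ x y z : S, mul (rd (mul x y) z) z = mul x (mul (rd y z) z)) (a b c : S) :
    star mul rd (mul a b) c = mul a (star mul rd b c) := by
  rw [star_eq_mul_rd A3, star_eq_mul_rd A3, A5]

theorem star_star_left (A3 : ∀ x y : S, mul (rd x y) y = rd (mul x y) y)
    (A4 : ∀ x y z : S, rd (mul (rd x y) y) z = rd x z) (a b c : S) :
    star mul rd (star mul rd a b) c = star mul rd a c := by
  rw [star_eq_mul_rd A3 a b, star_eq_mul_rd A3, A4, ← star_eq_mul_rd A3]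

theorem mul_left_cancel_of_ld_mul (A1 : ∀ x y : S, ld x (mul x y) = y) {a b c : S}
    (h : mul a b = mul a c) : b = c := by
  rw [← A1 a b, h, A1]

theorem star_self (A1 : ∀ x y : S, ld x (mul x y) = y)
    (A3 : ∀ x y : S, mul (rd x y) y = rd (mul x y) y)
    (A4 : ∀ x y z : S, rd (mul (rd x y) y) z = rd x z)
    (A5 : ∀ x y z : S, mul (rd (mul x y) z) z = mul x (mul (rd y z) z)) (a : S) :
    star mul rd a a = a := by
  have h : mul (rd a a) a = mul (rd a a) (star mul rd a a) := calc
    mul (rd a a) a = star mul rd a a := (star_eq_mul_rd A3 a a).symm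
    _ = star mul rd (star mul rd a a) a := (star_star_left A3 A4 a a a).symm
    _ = star mul rd (mul (rd a a) a) a := by rw [star_eq_mul_rd A3 a a]
    _ = mul (rd a a) (star mul rd a a) := star_mul_left A3 A5 _ _ _
  exact (mul_left_cancel_of_ld_mul A1 h).symm

theorem star_right_eq_of_star_eq_self (A3 : ∀ x y : S, mul (rd x y) y = rd (mul x y) y)
    (A4 : ∀ x y z : S, rd (mul (rd x y) y) z = rd x z)
    (A5 : ∀ x y z : S, mul (rd (mul x y) z) z = mul x (mul (rd y z) z)) {u c : S}
    (h : star mul rd u c = u) (x : S) : star mul rd x u = star mul rd x c := calc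
  star mul rd x u = mul (rd x u) u := star_eq_mul_rd A3 x u
  _ = star mul rd (mul (rd x u) u) c := by rw [star_mul_left A3 A5, h]
  _ = star mul rd (star mul rd x u) c := by rw [star_eq_mul_rd A3 x u]
  _ = star mul rd x c := star_star_left A3 A4 x u c

theorem star_mul_right_self (A1 : ∀ x y : S, ld x (mul x y) = y)
    (A3 : ∀ x y : S, mul (rd x y) y = rd (mul x y) y)
    (A4 : ∀ x y z : S, rd (mul (rd x y) y) z = rd x z)
    (A5 : ∀ x y z : S, mul (rd (mul x y) z) z = mul x (mul (rd y z) z)) (y z : S) :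
    star mul rd z (mul y z) = z := by
  apply mul_left_cancel_of_ld_mul (a := y) A1
  rw [← star_mul_left A3 A5, star_self A1 A3 A4 A5]

theorem star_right_mul (A1 : ∀ x y : S, ld x (mul x y) = y)
    (A3 : ∀ x y : S, mul (rd x y) y = rd (mul x y) y)
    (A4 : ∀ x y z : S, rd (mul (rd x y) y) z = rd x z)
    (A5 : ∀ x y z : S, mul (rd (mul x y) z) z = mul x (mul (rd y z) z)) (x y z : S) :
    star mul rd x (mul y z) = star mul rd x z :=
  (star_right_eq_of_star_eq_self A3 A4 A5 (star_mul_right_self A1 A3 A4 A5 y z) x).symm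

theorem star_right_ld (A1 : ∀ x y : S, ld x (mul x y) = y)
    (A2 : ∀ x y : S, mul x (ld x y) = y)
    (A3 : ∀ x y : S, mul (rd x y) y = rd (mul x y) y)
    (A4 : ∀ x y z : S, rd (mul (rd x y) y) z = rd x z)
    (A5 : ∀ x y z : S, mul (rd (mul x y) z) z = mul x (mul (rd y z) z)) (x y z : S) :
    star mul rd x (ld y z) = star mul rd x z := by
  rw [← star_right_mul A1 A3 A4 A5 x y (ld y z), A2]

theorem star_right_rd (A3 : ∀ x y : S, mul (rd x y) y = rd (mul x y) y)
    (A4 : ∀ x y z : S, rd (mul (rd x y) y) z = rd x z)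
    (A5 : ∀ x y z : S, mul (rd (mul x y) z) z = mul x (mul (rd y z) z)) (x y z : S) :
    star mul rd x (rd y z) = star mul rd x z :=
  star_right_eq_of_star_eq_self A3 A4 A5 (A4 y z z) x

end SystemA

/-- In an algebra satisfying system (A),
`x ⋆ (y·z) = x ⋆ z`, `x ⋆ (y\z) = x ⋆ z` and `x ⋆ (y/z) = x ⋆ z`. -/
theorem star_right_translation_hom {S : Type*} (mul ld rd : S → S → S)
    (A1 : ∀ x y : S, ld x (mul x y) = y)
    (A2 : ∀ x y : S, mul x (ld x y) = y)
    (A3 : ∀ x y : S, mul (rd x y) y = rd (mul x y) y)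
    (A4 : ∀ x y z : S, rd (mul (rd x y) y) z = rd x z)
    (A5 : ∀ x y z : S, mul (rd (mul x y) z) z = mul x (mul (rd y z) z)) :
    ∀ x y z : S,
      star mul rd x (mul y z) = star mul rd x z ∧
      star mul rd x (ld y z) = star mul rd x z ∧
      star mul rd x (rd y z) = star mul rd x z :=
  fun x y z =>
    ⟨star_right_mul A1 A3 A4 A5 x y z, star_right_ld A1 A2 A3 A4 A5 x y z,
      star_right_rd A3 A4 A5 x y z⟩
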